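/- arXiv:2103.00546 — 4 statements merged into one kernel-verified Lean document; each statement's English description precedes it below -/
import Mathlib

section
/- Fix x ∈ (0,1]. For any w ∈ Λ_n(x) (a full cylinder in the parameter space), the length of the parameter cylinder satisfies |I(w)| = β̄(w) − β̲(w) ≥ (β̲(w) − 1)² (β̄(w))^{−1−n}. -/
open MeasureTheory Set
open scoped Classical

/-- The beta-transformation `T_β x = βx - ⌊βx⌋`. -/
noncomputable def betaT (β x : ℝ) : ℝ := Int.fract (β * x)

/-- The `k`-th digit (0-indexed) of the β-expansion of `x`: `ε_{k+1}(x,β) = ⌊β T_β^k x⌋`. -/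
noncomputable def betaDigit (β x : ℝ) (k : ℕ) : ℕ := ⌊β * (betaT β)^[k] x⌋₊

/-- `Σ_n(β)`: admissible words of length `n`, i.e. prefixes of β-expansions of points of `[0,1)`. -/
def admWords (β : ℝ) (n : ℕ) : Set (Fin n → ℕ) :=
  {w | ∃ x ∈ Set.Ico (0:ℝ) 1, ∀ i : Fin n, w i = betaDigit β x i}

/-- The cylinder `𝔍(w)` of points of `[0,1)` whose β-expansion starts with `w`. -/
def cyl (β : ℝ) {n : ℕ} (w : Fin n → ℕ) : Set ℝ :=
  {x | x ∈ Set.Ico (0:ℝ) 1 ∧ ∀ i : Fin n, betaDigit β x i = w i}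

/-- `Ξ_n(β)`: admissible words of length `n` whose cylinder is full (of length `β^{-n}`). -/
def fullWords (β : ℝ) (n : ℕ) : Set (Fin n → ℕ) :=
  {w | w ∈ admWords β n ∧ volume (cyl β w) = ENNReal.ofReal (1 / β ^ n)}

/-- `ε(β)`: the β-expansion of 1 (0-indexed). -/
noncomputable def eps1 (β : ℝ) (k : ℕ) : ℕ := betaDigit β 1 k

/-- `ε*(β)`: the infinite β-expansion of 1.  If `ε(β)` has a last nonzero digit at
(0-indexed) position `N`, it is the periodic sequence `(ε_0 ⋯ ε_{N-1} (ε_N - 1))^∞`;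
otherwise it is `ε(β)` itself. -/

noncomputable def epsStar (β : ℝ) : ℕ → ℕ :=
  if h : ∃ N, eps1 β N ≠ 0 ∧ ∀ k, N < k → eps1 β k = 0 then
    fun k => if k % (h.choose + 1) = h.choose then eps1 β h.choose - 1
             else eps1 β (k % (h.choose + 1))
  else eps1 β

/-- Strict lexicographic order on sequences of nonnegative integers. -/
def lexLt (a b : ℕ → ℕ) : Prop := ∃ i, (∀ j, j < i → a j = b j) ∧ a i < b i

/-- Strict lexicographic order on words of length `n`. -/
def wordLt {n : ℕ} (a b : Fin n → ℕ) : Prop :=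
  ∃ i : Fin n, (∀ j, j < i → a j = b j) ∧ a i < b i

/-- `Ω_n(x)`: all length-`n` prefixes of β-expansions of `x` over all bases `β > 1`. -/
def prefWords (x : ℝ) (n : ℕ) : Set (Fin n → ℕ) :=
  {w | ∃ β : ℝ, 1 < β ∧ ∀ i : Fin n, w i = betaDigit β x i}

/-- The parameter cylinder `I(w) = {β > 1 : ε_1(x,β)⋯ε_n(x,β) = w}`. -/
def pcyl (x : ℝ) {n : ℕ} (w : Fin n → ℕ) : Set ℝ :=
  {β | 1 < β ∧ ∀ i : Fin n, betaDigit β x i = w i}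

/-- `Λ_n(x)`: words whose parameter cylinder is full, i.e. `{T_β^n x : β ∈ I(w)} = [0,1)`. -/
def pfull (x : ℝ) (n : ℕ) : Set (Fin n → ℕ) :=
  {w | w ∈ prefWords x n ∧ (fun β => (betaT β)^[n] x) '' pcyl x w = Set.Ico (0:ℝ) 1}

lemma betaT_iter_nonneg (β x : ℝ) (hx : 0 ≤ x) : ∀ k, 0 ≤ (betaT β)^[k] x
  | 0 => hx
  | (k+1) => by
      rw [Function.iterate_succ_apply']
      exact Int.fract_nonneg _

lemma betaT_iter_le_one (β x : ℝ) (hx : x ≤ 1) : ∀ k, (betaT β)^[k] x ≤ 1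
  | 0 => hx
  | (k+1) => by
      rw [Function.iterate_succ_apply']
      exact (Int.fract_lt_one _).le

lemma betaT_iter_eq (β x : ℝ) (hβ : 0 < β) (hx : 0 ≤ x) (k : ℕ) :
    (betaT β)^[k] x
      = β ^ k * (x - ∑ i ∈ Finset.range k, (betaDigit β x i : ℝ) / β ^ (i + 1)) := by
  induction k with
  | zero => simp
  | succ k ih =>
    have hnn : 0 ≤ β * (betaT β)^[k] x :=
      mul_nonneg hβ.le (betaT_iter_nonneg β x hx k)
    have hfl : ((betaDigit β x k : ℕ) : ℝ) = (⌊β * (betaT β)^[k] x⌋ : ℤ) := by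
      rw [betaDigit, natCast_floor_eq_intCast_floor hnn]
    have hpow : β ^ (k + 1) ≠ 0 := pow_ne_zero _ hβ.ne'
    rw [Function.iterate_succ_apply', betaT, Int.fract, ← hfl, Finset.sum_range_succ, ih]
    field_simp
    ring

lemma inv_pow_sub_le (l a b : ℝ) (hl : 0 < l) (ha : l ≤ a) (hab : a ≤ b) :
    ∀ m : ℕ, 1 / a ^ m - 1 / b ^ m ≤ m * (b - a) / l ^ (m + 1) := by
  have ha0 : 0 < a := hl.trans_le ha
  have hb0 : 0 < b := ha0.trans_le hab
  intro m
  induction m with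
  | zero => simp
  | succ m ih =>
    have hmono : (0:ℝ) ≤ 1 / a ^ m - 1 / b ^ m := by
      rw [sub_nonneg]
      exact one_div_le_one_div_of_le (by positivity) (pow_le_pow_left₀ ha0.le hab m)
    have h1 : 1 / a ^ (m+1) - 1 / b ^ (m+1)
        = (1 / a) * (1 / a ^ m - 1 / b ^ m) + (b - a) / (a * b ^ (m+1)) := by
      field_simp
      ring
    have h2 : (1 / a) * (1 / a ^ m - 1 / b ^ m) ≤ (1 / l) * (m * (b - a) / l ^ (m+1)) :=
      mul_le_mul (one_div_le_one_div_of_le hl ha) ih hmono (by positivity)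
    have h3 : (b - a) / (a * b ^ (m+1)) ≤ (b - a) / l ^ (m+2) := by
      have hden : l ^ (m+2) ≤ a * b ^ (m+1) := by
        calc l ^ (m+2) = l * l ^ (m+1) := by ring
          _ ≤ a * b ^ (m+1) :=
              mul_le_mul ha (pow_le_pow_left₀ hl.le (ha.trans hab) _) (by positivity) ha0.le
      exact div_le_div_of_nonneg_left (by linarith) (by positivity) hden
    have h4 : (1 / l) * (m * (b - a) / l ^ (m+1)) + (b - a) / l ^ (m+2)
        = (↑(m+1)) * (b - a) / l ^ (m+2) := by
      push_cast
      field_simp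
      ring
    rw [h1]
    calc (1 / a) * (1 / a ^ m - 1 / b ^ m) + (b - a) / (a * b ^ (m+1))
        ≤ (1 / l) * (m * (b - a) / l ^ (m+1)) + (b - a) / l ^ (m+2) := add_le_add h2 h3
      _ = (↑(m+1)) * (b - a) / l ^ (m+2) := h4

lemma geom_deriv_sum_le (l : ℝ) (hl : 1 < l) (n : ℕ) :
    ∑ i : Fin n, (((i:ℕ) + 1 : ℝ)) / l ^ ((i:ℕ) + 1) ≤ l / (l - 1) ^ 2 := by
  have hl0 : 0 < l := lt_trans one_pos hl
  set t := l⁻¹ with ht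
  have ht0 : 0 < t := inv_pos.2 hl0
  have ht1 : t < 1 := inv_lt_one_of_one_lt₀ hl
  have hnorm : ‖t‖ < 1 := by rw [Real.norm_eq_abs, abs_of_pos ht0]; exact ht1
  have hgeo := hasSum_coe_mul_geometric_of_norm_lt_one (𝕜 := ℝ) hnorm
  have h1 : ∑ i : Fin n, (((i:ℕ) + 1 : ℝ)) / l ^ ((i:ℕ) + 1)
      = ∑ k ∈ Finset.range (n+1), (k : ℝ) * t ^ k := by
    rw [Finset.sum_range_succ' (fun k => (k:ℝ) * t ^ k) n]
    rw [← Finset.sum_range (fun i => ((i:ℕ) + 1 : ℝ) / l ^ (i + 1))]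
    simp only [Nat.cast_zero, zero_mul, pow_zero, mul_one, add_zero]
    refine Finset.sum_congr rfl fun x _ => ?_
    rw [ht]
    rw [div_eq_mul_inv, inv_pow]
    push_cast
    ring
  have h2 : ∑ k ∈ Finset.range (n+1), (k : ℝ) * t ^ k ≤ t / (1 - t) ^ 2 :=
    sum_le_hasSum _ (fun k _ => by positivity) hgeo
  have h3 : t / (1 - t) ^ 2 = l / (l - 1) ^ 2 := by
    rw [ht]
    have h4 : l - 1 ≠ 0 := by linarith
    field_simp
  rw [h1]
  rw [h3] at h2
  exact h2

lemma main_ineq (x βl βu : ℝ) (n : ℕ) (w : Fin n → ℕ)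
    (hl : 1 < βl) (hlu : βl < βu)
    (hwle : ∀ i : Fin n, (w i : ℝ) ≤ βl)
    (βs : ℝ) (hs1 : βl ≤ βs) (hs2 : βs ≤ βu)
    (hxs : x = ∑ i : Fin n, (w i : ℝ) / βs ^ ((i:ℕ) + 1))
    (hxu : 1 / βu ^ n ≤ x - ∑ i : Fin n, (w i : ℝ) / βu ^ ((i:ℕ) + 1)) :
    (βl - 1) ^ 2 * βu ^ (-(1 : ℤ) - n) ≤ βu - βl := by
  have hl0 : (0:ℝ) < βl := lt_trans one_pos hl
  have hu0 : (0:ℝ) < βu := lt_trans hl0 hlu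
  have hs0 : (0:ℝ) < βs := lt_of_lt_of_le hl0 hs1
  -- termwise bound
  have hterm : ∀ i : Fin n,
      (w i : ℝ) * (1 / βs ^ ((i:ℕ)+1) - 1 / βu ^ ((i:ℕ)+1))
        ≤ (βu - βl) * (((i:ℕ) + 1 : ℝ) / βl ^ ((i:ℕ) + 1)) := by
    intro i
    set m : ℕ := (i:ℕ) + 1 with hm
    have hkey := inv_pow_sub_le βl βs βu hl0 hs1 hs2 m
    have hnn : (0:ℝ) ≤ 1 / βs ^ m - 1 / βu ^ m := by
      rw [sub_nonneg]
      exact one_div_le_one_div_of_le (by positivity) (pow_le_pow_left₀ hs0.le hs2 m)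
    calc (w i : ℝ) * (1 / βs ^ m - 1 / βu ^ m)
        ≤ βl * ((m : ℝ) * (βu - βs) / βl ^ (m+1)) :=
          mul_le_mul (hwle i) hkey hnn hl0.le
      _ = (m : ℝ) * (βu - βs) / βl ^ m := by
          rw [pow_succ]
          field_simp
      _ ≤ (m : ℝ) * (βu - βl) / βl ^ m := by
          gcongr
      _ = (βu - βl) * ((((i:ℕ):ℝ) + 1) / βl ^ m) := by
          rw [hm]
          push_cast
          ring
  -- sum the bounds
  have hsum : x - ∑ i : Fin n, (w i : ℝ) / βu ^ ((i:ℕ) + 1)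
      ≤ (βu - βl) * (βl / (βl - 1) ^ 2) := by
    rw [hxs, ← Finset.sum_sub_distrib]
    have : ∀ i ∈ Finset.univ (α := Fin n),
        (w i : ℝ) / βs ^ ((i:ℕ)+1) - (w i : ℝ) / βu ^ ((i:ℕ)+1)
          = (w i : ℝ) * (1 / βs ^ ((i:ℕ)+1) - 1 / βu ^ ((i:ℕ)+1)) := by
      intro i _
      ring
    rw [Finset.sum_congr rfl this]
    calc ∑ i : Fin n, (w i : ℝ) * (1 / βs ^ ((i:ℕ)+1) - 1 / βu ^ ((i:ℕ)+1))
        ≤ ∑ i : Fin n, (βu - βl) * (((i:ℕ) + 1 : ℝ) / βl ^ ((i:ℕ) + 1)) :=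
          Finset.sum_le_sum fun i _ => hterm i
      _ = (βu - βl) * ∑ i : Fin n, (((i:ℕ) + 1 : ℝ)) / βl ^ ((i:ℕ) + 1) := by
          rw [Finset.mul_sum]
      _ ≤ (βu - βl) * (βl / (βl - 1) ^ 2) := by
          have h := geom_deriv_sum_le βl hl n
          have hba : (0:ℝ) ≤ βu - βl := by linarith
          exact mul_le_mul_of_nonneg_left h hba
  have hA : 1 / βu ^ n ≤ (βu - βl) * βl / (βl - 1) ^ 2 := by
    calc 1 / βu ^ n ≤ x - ∑ i : Fin n, (w i : ℝ) / βu ^ ((i:ℕ) + 1) := hxu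
      _ ≤ (βu - βl) * (βl / (βl - 1) ^ 2) := hsum
      _ = (βu - βl) * βl / (βl - 1) ^ 2 := by ring
  have hl1 : (0:ℝ) < (βl - 1) ^ 2 := pow_pos (by linarith) 2
  rw [div_le_div_iff₀ (by positivity) hl1] at hA
  -- hA : 1 * (βl - 1)^2 ≤ (βu - βl) * βl * βu ^ n
  have hzpow : βu ^ (-(1 : ℤ) - n) = (βu ^ (n + 1))⁻¹ := by
    rw [show -(1:ℤ) - n = -((n + 1 : ℕ) : ℤ) by push_cast; ring, zpow_neg, zpow_natCast]
  rw [hzpow]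
  rw [← sub_nonneg]
  have hstep : (βl - 1)^2 * (βu ^ (n+1))⁻¹ ≤ (βl - 1)^2 * (βl * βu ^ n)⁻¹ := by
    have hd : βl * βu ^ n ≤ βu ^ (n+1) := by
      rw [pow_succ]
      calc βl * βu ^ n ≤ βu * βu ^ n :=
            mul_le_mul_of_nonneg_right hlu.le (by positivity)
        _ = βu ^ n * βu := by ring
    exact mul_le_mul_of_nonneg_left (inv_anti₀ (by positivity) hd) hl1.le
  have hstep2 : (βl - 1)^2 * (βl * βu ^ n)⁻¹ ≤ βu - βl := by
    rw [mul_inv_le_iff₀ (by positivity)]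
    calc (βl - 1)^2 = 1 * (βl - 1)^2 := by ring
      _ ≤ (βu - βl) * βl * βu ^ n := hA
      _ = (βu - βl) * (βl * βu ^ n) := by ring
  linarith [le_trans hstep hstep2]

theorem pfull_length_lower (x : ℝ) (hx : x ∈ Set.Ioc (0:ℝ) 1) (n : ℕ) (hn : 1 ≤ n)
    (w : Fin n → ℕ) (hw : w ∈ pfull x n) (βl βu : ℝ)
    (hI : pcyl x w = Set.Ico βl βu) :
    (βl - 1) ^ 2 * βu ^ (-(1 : ℤ) - n) ≤ βu - βl := by
  obtain ⟨hx0, hx1⟩ := hx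
  have himg := hw.2
  rw [hI] at himg
  -- βl < βu
  have hlt : βl < βu := by
    by_contra h
    have hemp : Set.Ico βl βu = (∅ : Set ℝ) := Set.Ico_eq_empty h
    rw [hemp, Set.image_empty] at himg
    have h0 : (0:ℝ) ∈ Set.Ico (0:ℝ) 1 := ⟨le_rfl, one_pos⟩
    rw [← himg] at h0
    exact h0
  have hβl : βl ∈ pcyl x w := by rw [hI]; exact ⟨le_rfl, hlt⟩
  have hl1 : 1 < βl := hβl.1
  have hl0 : (0:ℝ) < βl := lt_trans one_pos hl1
  -- digits bounded by βl
  have hwle : ∀ i : Fin n, (w i : ℝ) ≤ βl := by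
    intro i
    have hd := hβl.2 i
    have harg : 0 ≤ βl * (betaT βl)^[(i:ℕ)] x :=
      mul_nonneg hl0.le (betaT_iter_nonneg βl x hx0.le _)
    calc (w i : ℝ) = (betaDigit βl x i : ℝ) := by rw [hd]
      _ ≤ βl * (betaT βl)^[(i:ℕ)] x := Nat.floor_le harg
      _ ≤ βl * 1 := mul_le_mul_of_nonneg_left (betaT_iter_le_one βl x hx1 _) hl0.le
      _ = βl := mul_one βl
  -- the polynomial-like map g
  set F : ℝ → ℝ := fun β => ∑ i : Fin n, (w i : ℝ) / β ^ ((i:ℕ) + 1) with hF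
  set g : ℝ → ℝ := fun β => β ^ n * (x - F β) with hg
  have hgeq : ∀ β ∈ Set.Ico βl βu, (betaT β)^[n] x = g β := by
    intro β hβ
    have hmem : β ∈ pcyl x w := by rw [hI]; exact hβ
    have hβ0 : (0:ℝ) < β := lt_trans one_pos hmem.1
    rw [betaT_iter_eq β x hβ0 hx0.le n, hg, hF]
    have hsum : ∑ i ∈ Finset.range n, (betaDigit β x i : ℝ) / β ^ (i + 1)
        = ∑ i : Fin n, (w i : ℝ) / β ^ ((i:ℕ) + 1) := by
      rw [Finset.sum_range (fun i => (betaDigit β x i : ℝ) / β ^ (i + 1))]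
      exact Finset.sum_congr rfl fun i _ => by rw [hmem.2 i]
    rw [hsum]
  have himg' : g '' Set.Ico βl βu = Set.Ico (0:ℝ) 1 := by
    rw [← himg]
    exact (Set.image_congr hgeq).symm
  have hsurj : ∀ y ∈ Set.Ico (0:ℝ) 1, ∃ β ∈ Set.Ico βl βu, g β = y := by
    intro y hy
    rw [← himg'] at hy
    exact hy
  -- the point where g = 0
  obtain ⟨βs, hβs, hgs⟩ := hsurj 0 ⟨le_rfl, one_pos⟩
  have hs0 : (0:ℝ) < βs := lt_of_lt_of_le hl0 hβs.1
  have hxs : x = F βs := by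
    have hpow : βs ^ n ≠ 0 := pow_ne_zero _ (by positivity)
    rcases mul_eq_zero.1 hgs with h | h
    · exact absurd h hpow
    · linarith [sub_eq_zero.1 (by linarith : x - F βs = 0)]
  -- continuity of g on Icc
  have hgcont : ContinuousOn g (Set.Icc βl βu) := by
    apply ContinuousOn.mul (continuousOn_pow n)
    apply ContinuousOn.sub continuousOn_const
    apply continuousOn_finset_sum
    intro i _
    apply ContinuousOn.div continuousOn_const (continuousOn_pow _)
    intro β hβ
    have : (0:ℝ) < β := lt_of_lt_of_le hl0 hβ.1
    positivity
  -- max of g on Icc is at βu and ≥ 1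
  obtain ⟨c, hc, hmax⟩ :=
    isCompact_Icc.exists_isMaxOn (Set.nonempty_Icc.2 hlt.le) hgcont
  have hc1 : 1 ≤ g c := by
    by_contra h
    push_neg at h
    set y : ℝ := (max (g c) 0 + 1) / 2 with hy
    have hy0 : 0 ≤ y := by
      have := le_max_right (g c) 0
      rw [hy]; linarith
    have hy1 : y < 1 := by
      have := max_lt h one_pos
      rw [hy]; linarith
    have hyc : g c < y := by
      have h1 := le_max_left (g c) 0
      have h2 := max_lt h one_pos
      rw [hy]; linarith
    obtain ⟨β, hβ, hgy⟩ := hsurj y ⟨hy0, hy1⟩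
    have : g β ≤ g c := hmax (Set.Ico_subset_Icc_self hβ)
    rw [hgy] at this
    linarith
  have hcu : c = βu := by
    by_contra h
    have hcIco : c ∈ Set.Ico βl βu := ⟨hc.1, lt_of_le_of_ne hc.2 h⟩
    have : g c ∈ Set.Ico (0:ℝ) 1 := by
      rw [← himg']
      exact Set.mem_image_of_mem g hcIco
    linarith [this.2]
  have hgu : 1 ≤ g βu := hcu ▸ hc1
  -- extract the inequality at βu
  have hu0 : (0:ℝ) < βu := lt_trans hl0 hlt
  have hxu : 1 / βu ^ n ≤ x - F βu := by
    rw [div_le_iff₀ (pow_pos hu0 n)]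
    calc (1:ℝ) ≤ βu ^ n * (x - F βu) := hgu
      _ = (x - F βu) * βu ^ n := by ring
  exact main_ineq x βl βu n w hl1 hlt hwle βs hβs.1 hβs.2.le (by simpa [hF] using hxs) (by simpa [hF] using hxu)
end

section
/- Fix x ∈ (0,1]. If w ∈ Λ_n(x) is a full parameter word and v ∈ Σ_m(β̲(w)) is an admissible word in base β̲(w), then the concatenation wv belongs to Ω_{n+m}(x). If moreover v ∈ Ξ_m(β̲(w)) (v is full in base β̲(w)), then wv ∈ Λ_{n+m}(x). -/
/-!
On the parameter cylinder `I(w)`, which is an interval because digits are monotone in `β`, one has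
`T_β^n x = β^n (x - ∑ wᵢ β^{-(i+1)})`, and every `β ∈ I(w)` is at least `β̲ = β̲(w)`. For a target
`t`, the point `ρ(β) = ∑ vⱼ β^{-(j+1)} + t β^{-m}` has expansion starting with `v` and satisfies
`T_β^m ρ(β) = t` as soon as this holds at `β̲`, since the constraints `(a + s) / β < 1` that
govern it only loosen as `β` grows. Fullness of `w` lets `T_β^n x` run through all of `[0,1)` on
`I(w)`, so by the intermediate value theorem `T_β^n x = ρ(β)` for some `β ∈ I(w)`; for that `β`
the expansion of `x` starts with `wv` and `T_β^{n+m} x = t`. Admissibility of `v` in base `β̲`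
provides the target `t = 0`, fullness of `v` provides every `t ∈ [0,1)`.
-/

open MeasureTheory Set
open scoped Classical

section BetaTransformation

variable {β y : ℝ}

lemma iterate_betaT_nonneg (hy : 0 ≤ y) : ∀ k, 0 ≤ (betaT β)^[k] y
  | 0 => hy
  | k + 1 => by rw [Function.iterate_succ_apply']; exact Int.fract_nonneg _

lemma iterate_betaT_lt_one (hy : y < 1) : ∀ k, (betaT β)^[k] y < 1
  | 0 => hy
  | k + 1 => by rw [Function.iterate_succ_apply']; exact Int.fract_lt_one _

lemma iterate_betaT_mem_Ico (hy : y ∈ Ico 0 1) (k : ℕ) : (betaT β)^[k] y ∈ Ico 0 1 :=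
  ⟨iterate_betaT_nonneg hy.1 k, iterate_betaT_lt_one hy.2 k⟩

lemma iterate_betaT_succ (hβ : 0 ≤ β) (hy : 0 ≤ y) (k : ℕ) :
    (betaT β)^[k + 1] y = β * (betaT β)^[k] y - betaDigit β y k := by
  rw [Function.iterate_succ_apply', betaT, betaDigit, Int.fract,
    natCast_floor_eq_intCast_floor (mul_nonneg hβ (iterate_betaT_nonneg hy k))]

lemma betaDigit_iterate (j i : ℕ) :
    betaDigit β ((betaT β)^[j] y) i = betaDigit β y (i + j) := by
  rw [betaDigit, betaDigit, Function.iterate_add_apply]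

lemma iterate_betaT_le_of_digits {β₁ β₂ y₁ y₂ : ℝ} (hβ₁ : 0 ≤ β₁) (hβ : β₁ ≤ β₂) (hy₁ : 0 ≤ y₁)
    (hy : y₁ ≤ y₂) {k : ℕ} (hd : ∀ i < k, betaDigit β₁ y₁ i = betaDigit β₂ y₂ i) :
    (betaT β₁)^[k] y₁ ≤ (betaT β₂)^[k] y₂ := by
  induction k with
  | zero => exact hy
  | succ k ih =>
    have hk := ih fun i hi => hd i (hi.trans k.lt_succ_self)
    rw [iterate_betaT_succ hβ₁ hy₁, iterate_betaT_succ (hβ₁.trans hβ) (hy₁.trans hy),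
      hd k k.lt_succ_self]
    gcongr ?_ - _
    exact mul_le_mul hβ hk (iterate_betaT_nonneg hy₁ k) (hβ₁.trans hβ)

lemma betaDigit_le_of_digits {β₁ β₂ y₁ y₂ : ℝ} (hβ₁ : 0 ≤ β₁) (hβ : β₁ ≤ β₂) (hy₁ : 0 ≤ y₁)
    (hy : y₁ ≤ y₂) {k : ℕ} (hd : ∀ i < k, betaDigit β₁ y₁ i = betaDigit β₂ y₂ i) :
    betaDigit β₁ y₁ k ≤ betaDigit β₂ y₂ k :=
  Nat.floor_mono <| mul_le_mul hβ (iterate_betaT_le_of_digits hβ₁ hβ hy₁ hy hd)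
    (iterate_betaT_nonneg hy₁ k) (hβ₁.trans hβ)

lemma betaDigit_eq_of_le_of_le {β₁ β₂ y₁ y₂ : ℝ} (hβ₁ : 0 ≤ β₁) (hβ₁β : β₁ ≤ β) (hββ₂ : β ≤ β₂)
    (hy₁ : 0 ≤ y₁) (hy₁y : y₁ ≤ y) (hyy₂ : y ≤ y₂) {k : ℕ}
    (hd : ∀ i < k, betaDigit β₁ y₁ i = betaDigit β₂ y₂ i) :
    ∀ i < k, betaDigit β y i = betaDigit β₁ y₁ i := by
  induction k with
  | zero => intro i hi; omega
  | succ k ih =>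
    have ih := ih fun i hi => hd i (hi.trans k.lt_succ_self)
    intro i hi
    rcases Nat.lt_succ_iff_lt_or_eq.mp hi with hi | rfl
    · exact ih i hi
    · have h₁ := betaDigit_le_of_digits hβ₁ hβ₁β hy₁ hy₁y fun j hj => (ih j hj).symm
      have h₂ := betaDigit_le_of_digits (hβ₁.trans hβ₁β) hββ₂ (hy₁.trans hy₁y) hyy₂
        fun j hj => (ih j hj).trans (hd j (hj.trans i.lt_succ_self))
      rw [← hd i i.lt_succ_self] at h₂
      omega

end BetaTransformation

lemma cyl_ordConnected {β : ℝ} (hβ : 0 ≤ β) {m : ℕ} (v : Fin m → ℕ) :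
    (cyl β v).OrdConnected := by
  refine ⟨fun y₁ hy₁ y₂ hy₂ y hy => ⟨⟨hy₁.1.1.trans hy.1, hy.2.trans_lt hy₂.1.2⟩, fun i => ?_⟩⟩
  have hd : ∀ i < m, betaDigit β y₁ i = betaDigit β y₂ i := fun i hi =>
    (hy₁.2 ⟨i, hi⟩).trans (hy₂.2 ⟨i, hi⟩).symm
  exact (betaDigit_eq_of_le_of_le hβ le_rfl le_rfl hy₁.1.1 hy.1 hy.2 hd i i.2).trans (hy₁.2 i)

lemma pcyl_ordConnected {x : ℝ} (hx : 0 ≤ x) {n : ℕ} (w : Fin n → ℕ) :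
    (pcyl x w).OrdConnected := by
  refine ⟨fun β₁ hβ₁ β₂ hβ₂ β hβ => ⟨hβ₁.1.trans_le hβ.1, fun i => ?_⟩⟩
  have hd : ∀ i < n, betaDigit β₁ x i = betaDigit β₂ x i := fun i hi =>
    (hβ₁.2 ⟨i, hi⟩).trans (hβ₂.2 ⟨i, hi⟩).symm
  exact (betaDigit_eq_of_le_of_le (by linarith [hβ₁.1]) hβ.1 hβ.2 hx le_rfl le_rfl hd i i.2).trans
    (hβ₁.2 i)

/-- The point whose first `m` digits are `v` and whose `m`-th image is `t`, when such a point
exists. -/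
noncomputable def wordVal (β : ℝ) {m : ℕ} (v : Fin m → ℕ) (t : ℝ) : ℝ :=
  ∑ i : Fin m, (v i : ℝ) / β ^ ((i : ℕ) + 1) + t / β ^ m

section WordValue

variable {β : ℝ} {m : ℕ} {v : Fin m → ℕ}

lemma wordVal_strictMono (hβ : 0 < β) : StrictMono (wordVal β v) := fun t t' h => by
  unfold wordVal
  gcongr

lemma wordVal_nonneg (hβ : 0 < β) {t : ℝ} (ht : 0 ≤ t) : 0 ≤ wordVal β v t := by
  unfold wordVal
  positivity

lemma wordVal_le_wordVal_of_le {β' t : ℝ} (hβ : 0 < β) (hββ' : β ≤ β') (ht : 0 ≤ t) :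
    wordVal β' v t ≤ wordVal β v t := by
  unfold wordVal
  gcongr

lemma wordVal_zero_lt_wordVal_zero_of_lt {β' : ℝ} (hβ : 0 < β) (hββ' : β < β')
    (hpos : 0 < wordVal β' v 0) :
    wordVal β' v 0 < wordVal β v 0 := by
  simp only [wordVal, zero_div, add_zero] at hpos ⊢
  obtain ⟨i, -, hi⟩ := Finset.exists_lt_of_sum_lt (f := fun _ => (0 : ℝ)) (by simpa using hpos)
  refine Finset.sum_lt_sum (fun j _ => by gcongr) ⟨i, Finset.mem_univ _, ?_⟩
  have : (0 : ℝ) < v i := by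
    rcases Nat.eq_zero_or_pos (v i) with h | h
    · simp [h] at hi
    · exact_mod_cast h
  gcongr

lemma continuousOn_wordVal {s : Set ℝ} (hs : ∀ β ∈ s, β ≠ 0) {ρ : ℝ → ℝ}
    (hρ : ContinuousOn ρ s) : ContinuousOn (fun β => wordVal β v (ρ β)) s := by
  unfold wordVal
  fun_prop (disch := intro β hβ; exact pow_ne_zero _ (hs β hβ))

lemma eq_wordVal_iterate {y : ℝ} (hβ : 0 < β) (hy : 0 ≤ y)
    (hd : ∀ i : Fin m, betaDigit β y i = v i) : y = wordVal β v ((betaT β)^[m] y) := by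
  induction m with
  | zero => simp [wordVal]
  | succ m ih =>
    conv_lhs => rw [ih (v := Fin.init v) fun i => hd i.castSucc]
    have hlast := hd (Fin.last m)
    rw [Fin.val_last] at hlast
    rw [iterate_betaT_succ hβ.le hy, hlast]
    simp only [wordVal, Fin.sum_univ_castSucc, Fin.init, Fin.val_castSucc, Fin.val_last]
    field_simp
    ring

end WordValue

section CylinderImage

variable {β : ℝ} {m : ℕ} {v : Fin m → ℕ}

lemma mem_cyl_snoc {y : ℝ} {a : ℕ} :
    y ∈ cyl β (Fin.snoc v a : Fin (m + 1) → ℕ) ↔ y ∈ cyl β v ∧ betaDigit β y m = a := by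
  simp only [cyl, Set.mem_ofPred_eq, Fin.forall_fin_succ', Fin.snoc_castSucc, Fin.snoc_last,
    Fin.val_castSucc, Fin.val_last, and_assoc]

lemma image_iterate_cyl_zero (β : ℝ) (v : Fin 0 → ℕ) :
    (betaT β)^[0] '' cyl β v = Ico 0 1 := by
  ext
  simp [cyl]

lemma mem_image_iterate_cyl_snoc (hβ : 0 < β) {a : ℕ} {t : ℝ} :
    t ∈ (betaT β)^[m + 1] '' cyl β (Fin.snoc v a : Fin (m + 1) → ℕ) ↔
      t ∈ Ico 0 1 ∧ (a + t) / β ∈ (betaT β)^[m] '' cyl β v := by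
  constructor
  · rintro ⟨y, hy, rfl⟩
    obtain ⟨hyv, hya⟩ := mem_cyl_snoc.mp hy
    refine ⟨iterate_betaT_mem_Ico hy.1 _, y, hyv, ?_⟩
    rw [iterate_betaT_succ hβ.le hyv.1.1, hya]
    field_simp
    ring
  · rintro ⟨ht, y, hyv, hys⟩
    have hβs : β * (betaT β)^[m] y = a + t := by
      rw [hys]
      field_simp
    have hya : betaDigit β y m = a := by
      rw [betaDigit, hβs, add_comm, Nat.floor_add_natCast ht.1, Nat.floor_eq_zero.mpr ht.2,
        zero_add]
    refine ⟨y, mem_cyl_snoc.mpr ⟨hyv, hya⟩, ?_⟩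
    rw [iterate_betaT_succ hβ.le hyv.1.1, hβs, hya]
    ring

lemma mem_image_iterate_cyl_of_le {β' t t' : ℝ} (hβ : 0 < β) (hββ' : β ≤ β')
    (ht : t ∈ (betaT β)^[m] '' cyl β v) (ht' : 0 ≤ t') (htt' : t' ≤ t) :
    t' ∈ (betaT β')^[m] '' cyl β' v := by
  induction m generalizing t t' with
  | zero =>
    rw [image_iterate_cyl_zero] at ht ⊢
    exact ⟨ht', htt'.trans_lt ht.2⟩
  | succ m ih =>
    rw [← Fin.snoc_init_self v, mem_image_iterate_cyl_snoc hβ] at ht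
    rw [← Fin.snoc_init_self v, mem_image_iterate_cyl_snoc (hβ.trans_le hββ')]
    have hβ' : 0 < β' := hβ.trans_le hββ'
    refine ⟨⟨ht', htt'.trans_lt ht.1.2⟩, ih ht.2 (by positivity) ?_⟩
    calc ((v (Fin.last m) : ℝ) + t') / β' ≤ (v (Fin.last m) + t') / β := by gcongr
      _ ≤ (v (Fin.last m) + t) / β := by gcongr

lemma wordVal_mem_cyl {t : ℝ} (hβ : 0 < β) (ht : t ∈ (betaT β)^[m] '' cyl β v) :
    wordVal β v t ∈ cyl β v ∧ (betaT β)^[m] (wordVal β v t) = t := by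
  obtain ⟨y, hy, rfl⟩ := ht
  rw [← eq_wordVal_iterate hβ hy.1.1 hy.2]
  exact ⟨hy, rfl⟩

lemma zero_mem_image_iterate_cyl (hβ : 0 < β) (hv : v ∈ admWords β m) :
    0 ∈ (betaT β)^[m] '' cyl β v := by
  obtain ⟨y, hy, hyv⟩ := hv
  have hcyl : y ∈ cyl β v := ⟨hy, fun i => (hyv i).symm⟩
  exact mem_image_iterate_cyl_of_le hβ le_rfl (mem_image_of_mem _ hcyl) le_rfl
    (iterate_betaT_nonneg hy.1 m)

/- `𝔍(v)` is an interval starting at `wordVal β v 0`, on which `T^m` is the affine map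
`y ↦ β^m (y - wordVal β v 0)`; having full length `β^{-m}`, it is mapped onto `[0,1)`. -/
lemma image_iterate_cyl_of_mem_fullWords (hβ : 0 < β) (hv : v ∈ fullWords β m) :
    (betaT β)^[m] '' cyl β v = Ico 0 1 := by
  refine Subset.antisymm (image_subset_iff.mpr fun y hy => iterate_betaT_mem_Ico hy.1 m)
    fun t ht => ?_
  have hlow := (wordVal_mem_cyl hβ (zero_mem_image_iterate_cyl hβ hv.1)).1
  have hmono := wordVal_strictMono (v := v) hβ
  suffices hmem : wordVal β v t ∈ cyl β v from
    ⟨_, hmem, hmono.injective (eq_wordVal_iterate hβ hmem.1.1 hmem.2).symm⟩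
  obtain ⟨z, hz, htz⟩ : ∃ z ∈ cyl β v, wordVal β v t ≤ z := by
    by_contra! hlt
    have hsub : cyl β v ⊆ Ico (wordVal β v 0) (wordVal β v t) := fun z hz =>
      ⟨(eq_wordVal_iterate hβ hz.1.1 hz.2).symm ▸ hmono.monotone
        (iterate_betaT_nonneg hz.1.1 m), hlt z hz⟩
    have hvol := (measure_mono hsub).trans_eq Real.volume_Ico
    rw [hv.2, ENNReal.ofReal_le_ofReal_iff (sub_nonneg.mpr (hmono.monotone ht.1))] at hvol
    simp only [wordVal, zero_div, add_zero] at hvol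
    have : 1 / β ^ m ≤ t / β ^ m := by linarith
    rw [div_le_div_iff_of_pos_right (by positivity)] at this
    linarith [ht.2]
  exact (cyl_ordConnected hβ.le v).out hlow hz ⟨hmono.monotone ht.1, htz⟩

end CylinderImage

section ParameterCylinder

variable {x : ℝ} {n : ℕ} {w : Fin n → ℕ}

lemma eq_wordVal_of_mem_pcyl (hx : 0 ≤ x) {β : ℝ} (hβ : β ∈ pcyl x w) :
    x = wordVal β w ((betaT β)^[n] x) :=
  eq_wordVal_iterate (zero_lt_one.trans hβ.1) hx hβ.2

lemma le_of_mem_pcyl {βl β : ℝ} (hx : 0 < x) (hroot : x = wordVal βl w 0)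
    (hβ : β ∈ pcyl x w) : βl ≤ β := by
  by_contra! hlt
  have hβ0 : 0 < β := zero_lt_one.trans hβ.1
  have hlt' := wordVal_zero_lt_wordVal_zero_of_lt hβ0 hlt (hroot ▸ hx)
  have hle := (wordVal_strictMono (v := w) hβ0).monotone (iterate_betaT_nonneg (β := β) hx.le n)
  rw [← eq_wordVal_of_mem_pcyl hx.le hβ] at hle
  linarith

lemma mem_pcyl_append {β : ℝ} {m : ℕ} {v : Fin m → ℕ} :
    β ∈ pcyl x (Fin.append w v) ↔
      β ∈ pcyl x w ∧ ∀ j : Fin m, betaDigit β ((betaT β)^[n] x) j = v j := by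
  simp only [pcyl, Set.mem_ofPred_eq, Fin.forall_fin_add, Fin.append_left, Fin.append_right,
    Fin.val_castAdd, Fin.val_natAdd, betaDigit_iterate, add_comm, and_assoc]

lemma exists_mem_pcyl_iterate_eq {βl : ℝ} (hx : 0 < x) (hw : w ∈ pfull x n) (hβl : 0 < βl)
    (hroot : x = wordVal βl w 0) {ρ : ℝ → ℝ} (hρ : ContinuousOn ρ (Ici βl))
    (hρ0 : ∀ β, βl ≤ β → 0 ≤ ρ β) (hρle : ∀ β, βl ≤ β → ρ β ≤ ρ βl) (hρ1 : ρ βl < 1) :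
    ∃ β ∈ pcyl x w, (betaT β)^[n] x = ρ β := by
  have hsurj : ∀ c ∈ Ico (0 : ℝ) 1, ∃ β ∈ pcyl x w, (betaT β)^[n] x = c := fun c hc => by
    rwa [← hw.2] at hc
  obtain ⟨β₁, hβ₁, hT₁⟩ := hsurj 0 ⟨le_rfl, one_pos⟩
  obtain ⟨β₂, hβ₂, hT₂⟩ := hsurj ((ρ βl + 1) / 2) ⟨by linarith [hρ0 βl le_rfl], by linarith⟩
  have hle₁ := le_of_mem_pcyl hx hroot hβ₁
  have hle₂ := le_of_mem_pcyl hx hroot hβ₂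
  have hg₁ : x ≤ wordVal β₁ w (ρ β₁) := by
    rw [eq_wordVal_of_mem_pcyl hx.le hβ₁, hT₁]
    exact (wordVal_strictMono (hβl.trans_le hle₁)).monotone (hρ0 _ hle₁)
  have hg₂ : wordVal β₂ w (ρ β₂) ≤ x := by
    rw [eq_wordVal_of_mem_pcyl hx.le hβ₂, hT₂]
    exact (wordVal_strictMono (hβl.trans_le hle₂)).monotone (by linarith [hρle β₂ hle₂])
  have hsub : uIcc β₁ β₂ ⊆ Ici βl := ordConnected_Ici.uIcc_subset hle₁ hle₂
  have hcont : ContinuousOn (fun β => wordVal β w (ρ β)) (uIcc β₁ β₂) :=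
    continuousOn_wordVal (fun β hβ => (hβl.trans_le (hsub hβ)).ne') (hρ.mono hsub)
  obtain ⟨β, hβ, hgβ⟩ := intermediate_value_uIcc hcont (mem_uIcc.mpr (Or.inr ⟨hg₂, hg₁⟩))
  have hβw := (pcyl_ordConnected hx.le w).uIcc_subset hβ₁ hβ₂ hβ
  refine ⟨β, hβw, (wordVal_strictMono (v := w) (zero_lt_one.trans hβw.1)).injective ?_⟩
  rw [← eq_wordVal_of_mem_pcyl hx.le hβw]
  exact hgβ.symm

lemma exists_mem_pcyl_append {βl t : ℝ} {m : ℕ} {v : Fin m → ℕ} (hx : 0 < x)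
    (hw : w ∈ pfull x n) (hβl : 0 < βl) (hroot : x = wordVal βl w 0)
    (ht : t ∈ (betaT βl)^[m] '' cyl βl v) :
    ∃ β ∈ pcyl x (Fin.append w v), (betaT β)^[n + m] x = t := by
  have ht0 : 0 ≤ t := by
    obtain ⟨y, hy, rfl⟩ := ht
    exact iterate_betaT_nonneg hy.1.1 m
  obtain ⟨β, hβ, hTn⟩ := exists_mem_pcyl_iterate_eq hx hw hβl hroot (ρ := fun β => wordVal β v t)
    (continuousOn_wordVal (fun β hβ => (hβl.trans_le hβ).ne') continuousOn_const)
    (fun β h => wordVal_nonneg (hβl.trans_le h) ht0) (fun β h => wordVal_le_wordVal_of_le hβl h ht0)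
    (wordVal_mem_cyl hβl ht).1.1.2
  have hβl_le := le_of_mem_pcyl hx hroot hβ
  obtain ⟨hcyl, hTm⟩ := wordVal_mem_cyl (hβl.trans_le hβl_le)
    (mem_image_iterate_cyl_of_le hβl hβl_le ht ht0 le_rfl)
  refine ⟨β, mem_pcyl_append.mpr ⟨hβ, hTn ▸ hcyl.2⟩, ?_⟩
  rw [add_comm, Function.iterate_add_apply, hTn, hTm]

end ParameterCylinder

theorem pfull_extend (x : ℝ) (hx : x ∈ Set.Ioc (0:ℝ) 1) (n m : ℕ)
    (w : Fin n → ℕ) (hw : w ∈ pfull x n) (βl : ℝ) (hβl : 1 < βl)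
    (hroot : x = ∑ i : Fin n, (w i : ℝ) / βl ^ ((i : ℕ) + 1)) (v : Fin m → ℕ) :
    (v ∈ admWords βl m → Fin.append w v ∈ prefWords x (n + m)) ∧
      (v ∈ fullWords βl m → Fin.append w v ∈ pfull x (n + m)) := by
  have hβl0 : 0 < βl := zero_lt_one.trans hβl
  have hroot' : x = wordVal βl w 0 := by simpa [wordVal] using hroot
  have hpref (hv : v ∈ admWords βl m) : Fin.append w v ∈ prefWords x (n + m) := by
    obtain ⟨β, hβ, -⟩ :=
      exists_mem_pcyl_append hx.1 hw hβl0 hroot' (zero_mem_image_iterate_cyl hβl0 hv)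
    exact ⟨β, hβ.1, fun i => (hβ.2 i).symm⟩
  refine ⟨hpref, fun hv => ⟨hpref hv.1, Subset.antisymm ?_ fun t ht => ?_⟩⟩
  · rintro _ ⟨β, hβ, rfl⟩
    have hTn : (betaT β)^[n] x ∈ Ico 0 1 := hw.2 ▸ mem_image_of_mem _ (mem_pcyl_append.mp hβ).1
    simpa only [add_comm n m, Function.iterate_add_apply] using iterate_betaT_mem_Ico hTn m
  · rw [← image_iterate_cyl_of_mem_fullWords hβl0 hv] at ht
    exact exists_mem_pcyl_append hx.1 hw hβl0 hroot' ht
end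

section
/- Fix x ∈ (0,1] and a fixed base N-parameter setup: let u ∈ Ω_{a}(x) with β̲(u) ≥ β_N > 1 and suppose a satisfies x β_N^n ≥ 2n² > max{β_N, 1/(β_N−1)} for all n ≥ a. Then for any q ≥ a and any w ∈ Ω_q(x) with w|_a = u, one has β̄(w)/(β̲(w))² < 1 and (β̄(w)/β̲(w))^{q+1} < 3. -/
open MeasureTheory Set
open scoped Classical

/-
For `β₁ ≤ β₂` in `I(w)`, comparing the two expansions `x = Σ wᵢ β^{-(i+1)} + T_β^q x · β^{-q}`
shows `x (β₂ - β₁) β₁^q ≤ β₁`. Since every `β ∈ I(w)` lies in `I(u)`, hence `β ≥ β_N`, we have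
`x β₁^q ≥ x β_N^q ≥ 2q²`, so `I(w)` has relative width at most `1 + 1/(2q²)`. The hypothesis
`1/(β_N - 1) < 2q²` makes this ratio smaller than `β_N ≤ β̲(w)`, and
`(1 + 1/(2q²))^{q+1} ≤ e < 3`.
-/

lemma betaT_iterate_nonneg {β x : ℝ} (hx : 0 ≤ x) : ∀ k : ℕ, 0 ≤ (betaT β)^[k] x
  | 0 => hx
  | k + 1 => by rw [Function.iterate_succ_apply']; exact Int.fract_nonneg _

lemma betaT_iterate_lt_one (β x : ℝ) {k : ℕ} (hk : k ≠ 0) : (betaT β)^[k] x < 1 := by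
  obtain ⟨j, rfl⟩ := Nat.exists_eq_succ_of_ne_zero hk
  rw [Function.iterate_succ_apply']
  exact Int.fract_lt_one _

lemma mul_betaT_iterate {β x : ℝ} (hβ : 0 ≤ β) (hx : 0 ≤ x) (k : ℕ) :
    β * (betaT β)^[k] x = betaDigit β x k + (betaT β)^[k + 1] x := by
  rw [Function.iterate_succ_apply', betaT, betaDigit,
    natCast_floor_eq_intCast_floor (mul_nonneg hβ (betaT_iterate_nonneg hx k)), Int.fract]
  ring

lemma eq_sum_betaDigit_add_betaT_iterate {β x : ℝ} (hβ : 0 < β) (hx : 0 ≤ x) (q : ℕ) :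
    x = ∑ i ∈ Finset.range q, (betaDigit β x i : ℝ) / β ^ (i + 1) + (betaT β)^[q] x / β ^ q := by
  induction q with
  | zero => simp
  | succ q ih =>
    have hstep : (betaT β)^[q] x / β ^ q
        = betaDigit β x q / β ^ (q + 1) + (betaT β)^[q + 1] x / β ^ (q + 1) := by
      rw [← add_div, ← mul_betaT_iterate hβ.le hx, pow_succ']
      field_simp
    rw [Finset.sum_range_succ, add_assoc, ← hstep]
    exact ih

lemma pcyl_expansion {x : ℝ} (hx : 0 ≤ x) {q : ℕ} {w : Fin q → ℕ} {β : ℝ} (hβ : β ∈ pcyl x w) :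
    x = ∑ i : Fin q, (w i : ℝ) / β ^ ((i : ℕ) + 1) + (betaT β)^[q] x / β ^ q := by
  simp_rw [← hβ.2]
  rw [Fin.sum_univ_eq_sum_range (fun i => (betaDigit β x i : ℝ) / β ^ (i + 1))]
  exact eq_sum_betaDigit_add_betaT_iterate (by linarith [hβ.1]) hx q

lemma mul_pow_le_mul_pow {β₁ β₂ : ℝ} (h₀ : 0 ≤ β₁) (h : β₁ ≤ β₂) {k : ℕ} (hk : k ≠ 0) :
    β₂ * β₁ ^ k ≤ β₁ * β₂ ^ k := by
  obtain ⟨j, rfl⟩ := Nat.exists_eq_succ_of_ne_zero hk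
  rw [pow_succ', pow_succ', mul_left_comm]
  gcongr
  exact h₀.trans h

lemma mul_div_pow_le_mul_div_pow {β₁ β₂ c : ℝ} (h₀ : 0 < β₁) (h : β₁ ≤ β₂) (hc : 0 ≤ c)
    {k : ℕ} (hk : k ≠ 0) : β₂ * (c / β₂ ^ k) ≤ β₁ * (c / β₁ ^ k) := by
  have h₂ : 0 < β₂ := h₀.trans_le h
  rw [mul_div_assoc', mul_div_assoc', div_le_div_iff₀ (by positivity) (by positivity)]
  have := mul_pow_le_mul_pow h₀.le h hk
  calc β₂ * c * β₁ ^ k = c * (β₂ * β₁ ^ k) := by ring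
    _ ≤ c * (β₁ * β₂ ^ k) := by gcongr
    _ = β₁ * c * β₂ ^ k := by ring

lemma pcyl_width {x : ℝ} (hx : 0 ≤ x) {q : ℕ} (hq : q ≠ 0) {w : Fin q → ℕ} {β₁ β₂ : ℝ}
    (h₁ : β₁ ∈ pcyl x w) (h₂ : β₂ ∈ pcyl x w) (h : β₁ ≤ β₂) :
    x * (β₂ - β₁) * β₁ ^ q ≤ β₁ := by
  have hβ₁ : 0 < β₁ := by linarith [h₁.1]
  have hβ₂ : 0 < β₂ := by linarith [h₂.1]
  set S : ℝ → ℝ := fun β => ∑ i : Fin q, (w i : ℝ) / β ^ ((i : ℕ) + 1)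
  set t₁ := (betaT β₁)^[q] x
  set t₂ := (betaT β₂)^[q] x
  have ht₁ : 0 ≤ t₁ := betaT_iterate_nonneg hx q
  have ht₂ : t₂ < 1 := betaT_iterate_lt_one β₂ x hq
  have hx₁ : x = S β₁ + t₁ / β₁ ^ q := pcyl_expansion hx h₁
  have hx₂ : x = S β₂ + t₂ / β₂ ^ q := pcyl_expansion hx h₂
  -- each term `c β^{-k}` with `k ≥ 1` decays at least like `β⁻¹`
  have hdecay : β₂ * (S β₂ + t₁ / β₂ ^ q) ≤ β₁ * (S β₁ + t₁ / β₁ ^ q) := by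
    simp only [S, mul_add, Finset.mul_sum]
    refine add_le_add (Finset.sum_le_sum fun i _ => ?_) ?_
    · exact mul_div_pow_le_mul_div_pow hβ₁ h (Nat.cast_nonneg _) (Nat.succ_ne_zero _)
    · exact mul_div_pow_le_mul_div_pow hβ₁ h ht₁ hq
  have hwidth₂ : x * (β₂ - β₁) * β₂ ^ q ≤ β₂ := by
    have hgap : x * (β₂ - β₁) ≤ β₂ * ((t₂ - t₁) / β₂ ^ q) := by
      have e : S β₂ + t₁ / β₂ ^ q = x - (t₂ - t₁) / β₂ ^ q := by rw [hx₂]; ring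
      rw [e, ← hx₁] at hdecay
      linarith
    calc x * (β₂ - β₁) * β₂ ^ q ≤ β₂ * ((t₂ - t₁) / β₂ ^ q) * β₂ ^ q := by gcongr
      _ = β₂ * (t₂ - t₁) := by field_simp
      _ ≤ β₂ := by nlinarith
  have hxd : 0 ≤ x * (β₂ - β₁) := mul_nonneg hx (by linarith)
  refine le_of_mul_le_mul_left ?_ hβ₂
  calc β₂ * (x * (β₂ - β₁) * β₁ ^ q) = x * (β₂ - β₁) * (β₂ * β₁ ^ q) := by ring
    _ ≤ x * (β₂ - β₁) * (β₁ * β₂ ^ q) :=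
        mul_le_mul_of_nonneg_left (mul_pow_le_mul_pow hβ₁.le h hq) hxd
    _ = β₁ * (x * (β₂ - β₁) * β₂ ^ q) := by ring
    _ ≤ β₁ * β₂ := by gcongr
    _ = β₂ * β₁ := mul_comm _ _

lemma pcyl_le_mul {x : ℝ} (hx : 0 ≤ x) {q : ℕ} (hq : q ≠ 0) {w : Fin q → ℕ} {c β₁ β₂ : ℝ}
    (hc : 0 < c) (hcβ : c ≤ x * β₁ ^ q) (h₁ : β₁ ∈ pcyl x w) (h₂ : β₂ ∈ pcyl x w) :
    β₂ ≤ β₁ * (1 + 1 / c) := by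
  have hβ₁ : 0 < β₁ := by linarith [h₁.1]
  rcases le_total β₁ β₂ with h | h
  · have hwidth := pcyl_width hx hq h₁ h₂ h
    have : c * (β₂ - β₁) ≤ β₁ := by
      calc c * (β₂ - β₁) ≤ x * β₁ ^ q * (β₂ - β₁) := by gcongr
        _ = x * (β₂ - β₁) * β₁ ^ q := by ring
        _ ≤ β₁ := hwidth
    have : β₂ - β₁ ≤ β₁ / c := by rw [le_div_iff₀ hc]; linarith
    rw [mul_one_add, mul_one_div]
    linarith
  · nlinarith [div_pos one_pos hc]

lemma csSup_le_csInf_mul {s : Set ℝ} (hs : s.Nonempty) {k : ℝ} (hk : 0 < k)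
    (h : ∀ a ∈ s, ∀ b ∈ s, b ≤ a * k) : sSup s ≤ sInf s * k := by
  rw [← div_le_iff₀ hk]
  refine le_csInf hs fun a ha => ?_
  rw [div_le_iff₀ hk]
  exact csSup_le hs fun b hb => h a ha b hb

lemma pcyl_sSup_le_sInf_mul {x : ℝ} (hx : 0 ≤ x) {q : ℕ} (hq : q ≠ 0) {w : Fin q → ℕ}
    (hne : (pcyl x w).Nonempty) {c : ℝ} (hc : 0 < c) (hcβ : ∀ β ∈ pcyl x w, c ≤ x * β ^ q) :
    sSup (pcyl x w) ≤ sInf (pcyl x w) * (1 + 1 / c) :=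
  csSup_le_csInf_mul hne (by positivity) fun _ h₁ _ h₂ => pcyl_le_mul hx hq hc (hcβ _ h₁) h₁ h₂

lemma pcyl_subset_of_prefix {x : ℝ} {a q : ℕ} (hq : a ≤ q) {u : Fin a → ℕ} {w : Fin q → ℕ}
    (hpre : ∀ i : Fin a, w (Fin.castLE hq i) = u i) : pcyl x w ⊆ pcyl x u :=
  fun _ hβ => ⟨hβ.1, fun i => hpre i ▸ hβ.2 (Fin.castLE hq i)⟩

lemma one_add_pow_lt_three {t : ℝ} (ht : 0 ≤ t) {n : ℕ} (hn : n * t ≤ 1) : (1 + t) ^ n < 3 :=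
  calc (1 + t) ^ n ≤ Real.exp t ^ n := by
        gcongr; linarith [Real.add_one_le_exp t]
    _ = Real.exp (n * t) := (Real.exp_nat_mul t n).symm
    _ ≤ Real.exp 1 := Real.exp_le_exp.mpr hn
    _ < 3 := by linarith [Real.exp_one_lt_d9]

theorem pcyl_ratio_bounds_general (x : ℝ) (hx : x ∈ Set.Ioc (0:ℝ) 1) (βN : ℝ) (hβN : 1 < βN)
    (a : ℕ) (u : Fin a → ℕ)
    (hlow : βN ≤ sInf (pcyl x u))
    (ha : ∀ n : ℕ, a ≤ n → 2 * (n : ℝ) ^ 2 ≤ x * βN ^ n ∧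
        max βN (1 / (βN - 1)) < 2 * (n : ℝ) ^ 2)
    (q : ℕ) (hq : a ≤ q) (w : Fin q → ℕ) (hw : w ∈ prefWords x q)
    (hpre : ∀ i : Fin a, w (Fin.castLE hq i) = u i) :
    sSup (pcyl x w) / (sInf (pcyl x w)) ^ 2 < 1 ∧
      (sSup (pcyl x w) / sInf (pcyl x w)) ^ (q + 1) < 3 := by
  obtain ⟨hcx, hcβ⟩ := ha q hq
  set c : ℝ := 2 * (q : ℝ) ^ 2
  have hc : 1 / (βN - 1) < c := (le_max_right _ _).trans_lt hcβ
  have hc₀ : 0 < c := lt_trans (by simpa using hβN) hc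
  have hq₀ : q ≠ 0 := by rintro rfl; simp [c] at hc₀
  have hβN_le : ∀ β ∈ pcyl x w, βN ≤ β := fun β hβ =>
    hlow.trans (csInf_le ⟨1, fun _ h => h.1.le⟩ (pcyl_subset_of_prefix hq hpre hβ))
  have hne : (pcyl x w).Nonempty := by
    obtain ⟨β, hβ, hd⟩ := hw
    exact ⟨β, hβ, fun i => (hd i).symm⟩
  have hsup := pcyl_sSup_le_sInf_mul hx.1.le hq₀ hne hc₀ fun β hβ =>
    hcx.trans (by gcongr; exacts [hx.1.le, hβN_le β hβ])
  have hinf : 1 + 1 / c < sInf (pcyl x w) := by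
    have : 1 / c < βN - 1 := by rwa [one_div_lt hc₀ (by linarith)]
    linarith [le_csInf hne hβN_le]
  set M := sSup (pcyl x w)
  set m := sInf (pcyl x w)
  have hm : 0 < m := by linarith [div_pos one_pos hc₀]
  have hratio : M / m ≤ 1 + 1 / c := by rw [div_le_iff₀ hm]; linarith
  constructor
  · rw [sq, ← div_div, div_lt_one hm]
    linarith
  · calc (M / m) ^ (q + 1) ≤ (1 + 1 / c) ^ (q + 1) := by
          gcongr
          exact div_nonneg (Real.sSup_nonneg fun β hβ => by linarith [hβ.1]) hm.le
      _ < 3 := by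
          refine one_add_pow_lt_three (by positivity) ?_
          have hq₁ : (1 : ℝ) ≤ q := Nat.one_le_cast.mpr (Nat.pos_of_ne_zero hq₀)
          rw [mul_one_div, div_le_one hc₀]
          push_cast
          nlinarith

theorem pcyl_ratio_bounds (x : ℝ) (hx : x ∈ Set.Ioc (0:ℝ) 1) (βN : ℝ) (hβN : 1 < βN)
    (a : ℕ) (u : Fin a → ℕ) (hu : u ∈ prefWords x a)
    (hlow : βN ≤ sInf (pcyl x u))
    (ha : ∀ n : ℕ, a ≤ n → 2 * (n : ℝ) ^ 2 ≤ x * βN ^ n ∧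
        max βN (1 / (βN - 1)) < 2 * (n : ℝ) ^ 2)
    (q : ℕ) (hq : a ≤ q) (w : Fin q → ℕ) (hw : w ∈ prefWords x q)
    (hpre : ∀ i : Fin a, w (Fin.castLE hq i) = u i) :
    sSup (pcyl x w) / (sInf (pcyl x w)) ^ 2 < 1 ∧
      (sSup (pcyl x w) / sInf (pcyl x w)) ^ (q + 1) < 3 :=
  pcyl_ratio_bounds_general x hx βN hβN a u hlow ha q hq w hw hpre
end

section
/- Fix x ∈ (0,1] and a sequence {x_n} in [0,1] and a function φ: ℕ → (0,1]. For any n ≥ 1 and any word v ∈ Ω_n(x), the set I(v;φ) = {β ∈ I(v) : |T_β^n x − x_n| < φ(n)} is an interval of length at most 2 x^{-1} φ(n) (β̲(v))^{1−n}. -/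
open MeasureTheory Set
open scoped Classical

lemma iter_nonneg (β y : ℝ) (hy : 0 ≤ y) : ∀ k, 0 ≤ (betaT β)^[k] y
  | 0 => hy
  | (k+1) => by
      rw [Function.iterate_succ_apply']
      exact Int.fract_nonneg _

lemma iter_lt_one (β y : ℝ) (k : ℕ) : (betaT β)^[k+1] y < 1 := by
  rw [Function.iterate_succ_apply']
  exact Int.fract_lt_one _

lemma iter_succ_eq (β y : ℝ) (k : ℕ) (h : 0 ≤ β * (betaT β)^[k] y) :
    (betaT β)^[k+1] y = β * (betaT β)^[k] y - (betaDigit β y k : ℝ) := by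
  rw [Function.iterate_succ_apply']
  show Int.fract _ = _
  rw [Int.fract, betaDigit, natCast_floor_eq_intCast_floor h]

lemma key (x : ℝ) (hx0 : 0 < x) {n : ℕ} (v : Fin n → ℕ)
    {β1 β β2 : ℝ} (h1 : β1 ∈ pcyl x v) (h2 : β2 ∈ pcyl x v)
    (hl : β1 ≤ β) (hr : β ≤ β2) :
    ∀ k, k ≤ n →
      ((betaT β1)^[k] x ≤ (betaT β)^[k] x ∧ (betaT β)^[k] x ≤ (betaT β2)^[k] x) ∧
      ∀ i : Fin n, (i : ℕ) < k → betaDigit β x (i : ℕ) = v i := by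
  have hβ1 : (1:ℝ) < β1 := h1.1
  have hβ1' : (0:ℝ) < β1 := lt_trans one_pos hβ1
  have hβ' : (0:ℝ) < β := lt_of_lt_of_le hβ1' hl
  have hβ2' : (0:ℝ) < β2 := lt_of_lt_of_le hβ' hr
  intro k
  induction k with
  | zero =>
      intro _
      exact ⟨⟨le_refl _, le_refl _⟩, fun i hi => absurd hi (Nat.not_lt_zero _)⟩
  | succ k ih =>
      intro hk1
      have hk : k < n := hk1
      obtain ⟨⟨hle1, hle2⟩, hdig⟩ := ih (le_of_lt hk)
      set a1 := (betaT β1)^[k] x with ha1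
      set a := (betaT β)^[k] x with ha
      set a2 := (betaT β2)^[k] x with ha2
      have ha1n : 0 ≤ a1 := iter_nonneg β1 x (le_of_lt hx0) k
      have han : 0 ≤ a := le_trans ha1n hle1
      have ha2n : 0 ≤ a2 := le_trans han hle2
      have hd1 : betaDigit β1 x k = v ⟨k, hk⟩ := h1.2 ⟨k, hk⟩
      have hd2 : betaDigit β2 x k = v ⟨k, hk⟩ := h2.2 ⟨k, hk⟩
      have hs1 : (betaT β1)^[k+1] x = β1 * a1 - (v ⟨k, hk⟩ : ℝ) := by
        rw [iter_succ_eq β1 x k (mul_nonneg (le_of_lt hβ1') ha1n), hd1]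
      have hs2 : (betaT β2)^[k+1] x = β2 * a2 - (v ⟨k, hk⟩ : ℝ) := by
        rw [iter_succ_eq β2 x k (mul_nonneg (le_of_lt hβ2') ha2n), hd2]
      have hm1 : β1 * a1 ≤ β * a := by nlinarith
      have hm2 : β * a ≤ β2 * a2 := by nlinarith
      have hlow : (v ⟨k, hk⟩ : ℝ) ≤ β * a := by
        have := iter_nonneg β1 x (le_of_lt hx0) (k+1)
        rw [hs1] at this
        linarith
      have hhigh : β * a < (v ⟨k, hk⟩ : ℝ) + 1 := by
        have := iter_lt_one β2 x k
        rw [hs2] at this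
        linarith
      have hfd : betaDigit β x k = v ⟨k, hk⟩ := by
        rw [betaDigit]
        exact (Nat.floor_eq_iff (mul_nonneg hβ'.le han)).mpr ⟨hlow, by linarith⟩
      have hs : (betaT β)^[k+1] x = β * a - (v ⟨k, hk⟩ : ℝ) := by
        rw [iter_succ_eq β x k (mul_nonneg hβ'.le han), hfd]
      refine ⟨⟨?_, ?_⟩, ?_⟩
      · rw [hs1, hs]; linarith
      · rw [hs2, hs]; linarith
      · intro i hi
        rcases Nat.lt_succ_iff_lt_or_eq.mp hi with h | h
        · exact hdig i h
        · have : i = ⟨k, hk⟩ := Fin.ext h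
          rw [this] at *
          simpa using hfd

lemma quant (x : ℝ) (hx0 : 0 < x) {n : ℕ} (v : Fin n → ℕ)
    {β1 β2 : ℝ} (h1 : β1 ∈ pcyl x v) (h2 : β2 ∈ pcyl x v) (hle : β1 ≤ β2) :
    ∀ k, k + 1 ≤ n →
      (β2 - β1) * x * β2 ^ k ≤ (betaT β2)^[k+1] x - (betaT β1)^[k+1] x := by
  have hβ1' : (0:ℝ) < β1 := lt_trans one_pos h1.1
  have hβ2' : (0:ℝ) < β2 := lt_of_lt_of_le hβ1' hle
  intro k
  induction k with
  | zero =>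
      intro h0
      have hk : 0 < n := h0
      have h01 : (betaT β1)^[0] x = x := rfl
      have h02 : (betaT β2)^[0] x = x := rfl
      have hs1 : (betaT β1)^[1] x = β1 * x - (v ⟨0, hk⟩ : ℝ) := by
        have := iter_succ_eq β1 x 0 (by rw [h01]; positivity)
        rw [h01] at this
        rw [this, h1.2 ⟨0, hk⟩]
      have hs2 : (betaT β2)^[1] x = β2 * x - (v ⟨0, hk⟩ : ℝ) := by
        have := iter_succ_eq β2 x 0 (by rw [h02]; positivity)
        rw [h02] at this
        rw [this, h2.2 ⟨0, hk⟩]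
      rw [hs1, hs2]
      ring_nf
      nlinarith
  | succ k ih =>
      intro hk2
      have hk1 : k + 1 ≤ n := le_of_lt hk2
      have hkn : k + 1 < n := hk2
      have hq := ih hk1
      set a1 := (betaT β1)^[k+1] x with ha1
      set a2 := (betaT β2)^[k+1] x with ha2
      have ha1n : 0 ≤ a1 := iter_nonneg β1 x (le_of_lt hx0) (k+1)
      have ha2n : 0 ≤ a2 := iter_nonneg β2 x (le_of_lt hx0) (k+1)
      have hs1 : (betaT β1)^[k+2] x = β1 * a1 - (v ⟨k+1, hkn⟩ : ℝ) := by
        rw [iter_succ_eq β1 x (k+1) (mul_nonneg hβ1'.le ha1n), h1.2 ⟨k+1, hkn⟩]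
      have hs2 : (betaT β2)^[k+2] x = β2 * a2 - (v ⟨k+1, hkn⟩ : ℝ) := by
        rw [iter_succ_eq β2 x (k+1) (mul_nonneg hβ2'.le ha2n), h2.2 ⟨k+1, hkn⟩]
      rw [hs1, hs2, pow_succ]
      have hpk : (0:ℝ) ≤ β2 ^ k := by positivity
      nlinarith

theorem target_set_interval_length (x : ℝ) (hx : x ∈ Set.Ioc (0:ℝ) 1) (xs : ℕ → ℝ)
    (hxs : ∀ k, xs k ∈ Set.Icc (0:ℝ) 1) (φ : ℕ → ℝ) (hφ : ∀ k, φ k ∈ Set.Ioc (0:ℝ) 1)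
    (n : ℕ) (hn : 1 ≤ n) (v : Fin n → ℕ) (hv : v ∈ prefWords x n) :
    ({β ∈ pcyl x v | |(betaT β)^[n] x - xs n| < φ n}).OrdConnected ∧
      volume {β ∈ pcyl x v | |(betaT β)^[n] x - xs n| < φ n} ≤
        ENNReal.ofReal (2 * x⁻¹ * φ n * (sInf (pcyl x v)) ^ ((1 : ℤ) - n)) := by
  obtain ⟨hx0, hx1⟩ := hx
  obtain ⟨β0, hβ0, hvd⟩ := hv
  have hβ0p : β0 ∈ pcyl x v := ⟨hβ0, fun i => (hvd i).symm⟩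
  have hne : (pcyl x v).Nonempty := ⟨β0, hβ0p⟩
  have hbdd : BddBelow (pcyl x v) := ⟨1, fun β hβ => hβ.1.le⟩
  have hs1 : 1 ≤ sInf (pcyl x v) := le_csInf hne (fun β hβ => hβ.1.le)
  have hs0 : (0:ℝ) < sInf (pcyl x v) := lt_of_lt_of_le one_pos hs1
  obtain ⟨m, rfl⟩ : ∃ m, n = m + 1 := ⟨n - 1, (Nat.succ_pred_eq_of_pos hn).symm⟩
  have hφ0 : 0 < φ (m+1) := (hφ (m+1)).1
  set s := sInf (pcyl x v) with hsdef
  have hsz : s ^ ((1:ℤ) - ((m+1 : ℕ) : ℤ)) = (s ^ m)⁻¹ := by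
    have he : (1:ℤ) - ((m+1 : ℕ) : ℤ) = -(m : ℤ) := by push_cast; ring
    rw [he, zpow_neg, zpow_natCast]
  constructor
  · refine ⟨fun β1 hb1 β2 hb2 β hβ => ?_⟩
    obtain ⟨hβl, hβr⟩ := hβ
    have hkey := key x hx0 v hb1.1 hb2.1 hβl hβr (m+1) le_rfl
    refine ⟨⟨lt_of_lt_of_le hb1.1.1 hβl, fun i => hkey.2 i i.2⟩, ?_⟩
    have h1 := abs_lt.mp hb1.2
    have h2 := abs_lt.mp hb2.2
    rw [abs_lt]
    exact ⟨by linarith [hkey.1.1], by linarith [hkey.1.2]⟩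
  · set S := {β ∈ pcyl x v | |(betaT β)^[m+1] x - xs (m+1)| < φ (m+1)} with hS
    rcases S.eq_empty_or_nonempty with hSe | hSne
    · rw [hSe]; simp
    set L := 2 * x⁻¹ * φ (m+1) * s ^ ((1:ℤ) - ((m+1 : ℕ) : ℤ)) with hL
    have hsm : (0:ℝ) < s ^ m := pow_pos hs0 m
    have hL0 : 0 ≤ L := by rw [hL, hsz]; positivity
    have hdiam : ∀ β1 ∈ S, ∀ β2 ∈ S, β2 - β1 ≤ L := by
      intro β1 hb1 β2 hb2
      rcases le_or_gt β2 β1 with h | h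
      · linarith
      have hq := quant x hx0 v hb1.1 hb2.1 h.le m le_rfl
      have hd1 := abs_lt.mp hb1.2
      have hd2 := abs_lt.mp hb2.2
      have hβ2_1 : (1:ℝ) < β2 := hb2.1.1
      have hb2m : (0:ℝ) < β2 ^ m := pow_pos (lt_trans one_pos hβ2_1) m
      have h2φ : (β2 - β1) * (x * β2 ^ m) < 2 * φ (m+1) := by nlinarith
      have hsle : s ≤ β2 := csInf_le hbdd hb2.1
      have hsmm : s ^ m ≤ β2 ^ m := pow_le_pow_left₀ hs0.le hsle m
      have key1 : β2 - β1 ≤ 2 * φ (m+1) / (x * β2 ^ m) :=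
        (le_div_iff₀ (by positivity)).mpr h2φ.le
      have key2 : 2 * φ (m+1) / (x * β2 ^ m) ≤ 2 * φ (m+1) / (x * s ^ m) := by
        gcongr
      have key3 : 2 * φ (m+1) / (x * s ^ m) = L := by
        rw [hL, hsz]
        field_simp
      linarith
    have hSbdd : BddBelow S := ⟨1, fun β hβ => hβ.1.1.le⟩
    have hsub : S ⊆ Set.Icc (sInf S) (sInf S + L) := by
      intro β hβ
      refine ⟨csInf_le hSbdd hβ, ?_⟩
      have hlb : β - L ≤ sInf S :=
        le_csInf hSne (fun β' hβ' => by have := hdiam β' hβ' β hβ; linarith)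
      linarith
    calc volume S ≤ volume (Set.Icc (sInf S) (sInf S + L)) := measure_mono hsub
      _ = ENNReal.ofReal L := by rw [Real.volume_Icc, add_sub_cancel_left]
end
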